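/- Commutation of shift and dilation: for f ∈ 𝓕 and real numbers p, q, a, setting b := p − D_{f,q}^{-1}(p−a), the shifted-then-dilated density equals the dilated-then-shifted density: S_a 𝒟_q f = 𝒟_p S_b f, where S_c h(x,v,r) := h(x−c,v,r). -/

import Mathlib

open MeasureTheory Filter Topology

/-- The mass function `σ_f(x) = ∬ r f(x,v,r) dv dr` of a density `f` on position–velocity–length
space (written in curried form `f x v r`). -/
noncomputable def sigmaF (f : ℝ → ℝ → ℝ → ℝ) (x : ℝ) : ℝ :=
  ∫ p : ℝ × ℝ, p.2 * f x p.1 p.2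

/-- The class `𝓛` of dominating profiles: nonnegative `γ(v,r)` with
`∬ (v² + r² + 1) γ(v,r) dv dr < ∞`. -/
def MemL (γ : ℝ → ℝ → ℝ) : Prop :=
  (∀ v r : ℝ, 0 ≤ γ v r) ∧
  Integrable (fun p : ℝ × ℝ => (p.1 ^ 2 + p.2 ^ 2 + 1) * γ p.1 p.2)

/-- The class `𝓕_γ`: nonnegative measurable densities `f(x,v,r)`, `C¹` in `x`, with `f` and
`∂ₓ f` dominated by `γ(v,r)`. -/
def MemFgamma (f : ℝ → ℝ → ℝ → ℝ) (γ : ℝ → ℝ → ℝ) : Prop :=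
  Measurable (fun p : ℝ × ℝ × ℝ => f p.1 p.2.1 p.2.2) ∧
  (∀ x v r : ℝ, 0 ≤ f x v r) ∧
  (∀ v r : ℝ, ContDiff ℝ 1 fun x => f x v r) ∧
  (∀ x v r : ℝ, f x v r ≤ γ v r) ∧
  (∀ x v r : ℝ, |deriv (fun x' => f x' v r) x| ≤ γ v r)

/-- The class `𝓕` of admissible densities: `f ∈ 𝓕_γ` for some `γ ∈ 𝓛`, with everywhere
positive mass function `σ_f`. -/
def MemF (f : ℝ → ℝ → ℝ → ℝ) : Prop :=
  (∃ γ, MemL γ ∧ MemFgamma f γ) ∧ ∀ x : ℝ, 0 < sigmaF f x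

/-- The class `𝓖` of dilated densities: `g ∈ 𝓕` with `‖σ_g‖_∞ < 1`. -/
def MemG (g : ℝ → ℝ → ℝ → ℝ) : Prop :=
  MemF g ∧ ∃ c : ℝ, c < 1 ∧ ∀ x : ℝ, sigmaF g x ≤ c

/-- The dilation function `D_{f,a}(b) = b + ∫_a^b σ_f(x) dx`. -/
noncomputable def Dfun (f : ℝ → ℝ → ℝ → ℝ) (a b : ℝ) : ℝ :=
  b + ∫ x in a..b, sigmaF f x

/-- The contraction function `C_{g,a}(b) = b - ∫_a^b σ_g(y) dy`. -/
noncomputable def Cfun (g : ℝ → ℝ → ℝ → ℝ) (a b : ℝ) : ℝ :=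
  b - ∫ x in a..b, sigmaF g x

/-- The dilation operator `𝒟_q f (y,v,r) = f(D_{f,q}⁻¹(y),v,r) / (1 + σ_f(D_{f,q}⁻¹(y)))`. -/
noncomputable def Dop (f : ℝ → ℝ → ℝ → ℝ) (q : ℝ) : ℝ → ℝ → ℝ → ℝ :=
  fun y v r =>
    f (Function.invFun (Dfun f q) y) v r / (1 + sigmaF f (Function.invFun (Dfun f q) y))

/-- The contraction operator `𝒞_q g (x,v,r) = g(C_{g,q}⁻¹(x),v,r) / (1 - σ_g(C_{g,q}⁻¹(x)))`. -/
noncomputable def Cop (g : ℝ → ℝ → ℝ → ℝ) (q : ℝ) : ℝ → ℝ → ℝ → ℝ :=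
  fun x v r =>
    g (Function.invFun (Cfun g q) x) v r / (1 - sigmaF g (Function.invFun (Cfun g q) x))

/-- The spatial shift operator `S_c h (x,v,r) = h(x - c, v, r)`. -/
def Sop (c : ℝ) (h : ℝ → ℝ → ℝ → ℝ) : ℝ → ℝ → ℝ → ℝ := fun x v r => h (x - c) v r

/-- The free (ideal gas) evolution `𝒯_t f (x,v,r) = f(x - v t, v, r)`. -/
def Tfree (t : ℝ) (f : ℝ → ℝ → ℝ → ℝ) : ℝ → ℝ → ℝ → ℝ := fun x v r => f (x - v * t) v r

/-- The mass flow `j_f⁺(x,v,t) = ∫_{w<v} ∫_x^{x+(v-w)t} ∫ r f(z,w,r) dr dz dw`: the mass with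
speed less than `v` crossing the trajectory `s ↦ x + v s` during `[0,t]`. -/
noncomputable def jplus (f : ℝ → ℝ → ℝ → ℝ) (x v t : ℝ) : ℝ :=
  ∫ w in Set.Iio v, (∫ z in x..(x + (v - w) * t), (∫ r : ℝ, r * f z w r))

/-- The mass flow `j_f⁻(x,v,t) = ∫_{w>v} ∫_{x+(v-w)t}^x ∫ r f(z,w,r) dr dz dw`: the mass with
speed greater than `v` crossing the trajectory `s ↦ x + v s` during `[0,t]`. -/
noncomputable def jminus (f : ℝ → ℝ → ℝ → ℝ) (x v t : ℝ) : ℝ :=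
  ∫ w in Set.Ioi v, (∫ z in (x + (v - w) * t)..x, (∫ r : ℝ, r * f z w r))

/-- The net mass flow `j_f = j_f⁺ - j_f⁻`. -/
noncomputable def jflow (f : ℝ → ℝ → ℝ → ℝ) (x v t : ℝ) : ℝ := jplus f x v t - jminus f x v t

/-- The macroscopic quasiparticle position `u_{g,v,t}(q) = q + v t + j_{𝒞_q g}(q,v,t)`. -/
noncomputable def uqp (g : ℝ → ℝ → ℝ → ℝ) (v t q : ℝ) : ℝ :=
  q + v * t + jflow (Cop g q) q v t

/-- The hard-rod evolution operator `𝒰_t g = S_{o_t} 𝒟_0 𝒯_t 𝒞_0 g` with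
`o_t = j_{𝒞_0 g}(0,0,t)`. -/
noncomputable def Uop (t : ℝ) (g : ℝ → ℝ → ℝ → ℝ) : ℝ → ℝ → ℝ → ℝ :=
  Sop (jflow (Cop g 0) 0 0 t) (Dop (Tfree t (Cop g 0)) 0)


/-!
Since `σ_{S_b f} = σ_f(· - b)`, a change of variables followed by moving the base point of the
integral from `p - b` to `q` gives `D_{S_b f, p}(x) = D_{f,q}(x - b) + (p - D_{f,q}(p - b))`.
The choice `b = p - D_{f,q}⁻¹(p - a)` makes the constant equal to `a`, so `D_{S_b f, p}` is
`D_{f,q}` conjugated by translations and its inverse is `y ↦ D_{f,q}⁻¹(y - a) + b`.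
-/

theorem Function.invFun_comp_sub_add {G H : Type*} [AddGroup G] [AddGroup H] {g : G → H}
    (hg : Function.Bijective g) (a : H) (b : G) (y : H) :
    Function.invFun (fun x => g (x - b) + a) y = Function.invFun g (y - a) + b := by
  have hinj : Function.Injective fun x => g (x - b) + a := fun x x' h =>
    sub_left_inj.mp (hg.injective (add_right_cancel h))
  have hsol : g (Function.invFun g (y - a) + b - b) + a = y := by
    rw [add_sub_cancel_right, Function.rightInverse_invFun hg.surjective, sub_add_cancel]
  conv_lhs => rw [← hsol]
  exact Function.leftInverse_invFun hinj _

theorem continuous_sigmaF {f : ℝ → ℝ → ℝ → ℝ} {γ : ℝ → ℝ → ℝ} (hγ : MemL γ)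
    (hf : MemFgamma f γ) : Continuous (sigmaF f) := by
  obtain ⟨hmeas, hf0, hfC1, hfγ, -⟩ := hf
  refine continuous_of_dominated
    (bound := fun p : ℝ × ℝ => (p.1 ^ 2 + p.2 ^ 2 + 1) * γ p.1 p.2)
    (fun x => ((measurable_snd.snd.mul hmeas).comp
      (measurable_const.prodMk measurable_id)).aestronglyMeasurable)
    (fun x => Eventually.of_forall fun p => ?_) hγ.2
    (Eventually.of_forall fun p => continuous_const.mul (hfC1 p.1 p.2).continuous)
  have hr : |p.2| ≤ p.1 ^ 2 + p.2 ^ 2 + 1 := by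
    rcases abs_cases p.2 with ⟨h, _⟩ | ⟨h, _⟩ <;>
      nlinarith [sq_nonneg p.1, sq_nonneg (p.2 - 1), sq_nonneg (p.2 + 1)]
  rw [norm_mul, Real.norm_eq_abs, Real.norm_of_nonneg (hf0 x p.1 p.2)]
  exact mul_le_mul hr (hfγ x p.1 p.2) (hf0 x p.1 p.2) (by positivity)

theorem sigmaF_Sop (f : ℝ → ℝ → ℝ → ℝ) (b : ℝ) :
    sigmaF (Sop b f) = fun x => sigmaF f (x - b) := rfl

theorem Dfun_Sop (f : ℝ → ℝ → ℝ → ℝ) (b p x : ℝ) :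
    Dfun (Sop b f) p x = Dfun f (p - b) (x - b) + b := by
  simp only [Dfun, sigmaF_Sop, intervalIntegral.integral_comp_sub_right (sigmaF f) b]
  ring

section ContinuousSigma

variable {f : ℝ → ℝ → ℝ → ℝ}

theorem Dfun_eq_Dfun_add (hσ : Continuous (sigmaF f)) (q q' x : ℝ) :
    Dfun f q x = Dfun f q' x + (Dfun f q q' - q') := by
  simp only [Dfun]
  rw [← intervalIntegral.integral_add_adjacent_intervals (hσ.intervalIntegrable q q')
    (hσ.intervalIntegrable q' x)]
  ring

theorem hasDerivAt_Dfun (hσ : Continuous (sigmaF f)) (q x : ℝ) :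
    HasDerivAt (Dfun f q) (1 + sigmaF f x) x :=
  (hasDerivAt_id x).add (intervalIntegral.integral_hasDerivAt_right (hσ.intervalIntegrable q x)
    (hσ.stronglyMeasurableAtFilter _ _) hσ.continuousAt)

theorem strictMono_Dfun (hσ : Continuous (sigmaF f)) (hσ₀ : ∀ x, 0 ≤ sigmaF f x)
    (q : ℝ) : StrictMono (Dfun f q) :=
  strictMono_of_hasDerivAt_pos (hasDerivAt_Dfun hσ q) fun x => by linarith [hσ₀ x]

theorem surjective_Dfun (hσ : Continuous (sigmaF f)) (hσ₀ : ∀ x, 0 ≤ sigmaF f x)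
    (q : ℝ) : Function.Surjective (Dfun f q) := by
  have hcont : Continuous (Dfun f q) :=
    continuous_iff_continuousAt.mpr fun x => (hasDerivAt_Dfun hσ q x).continuousAt
  refine hcont.surjective ?_ ?_
  · refine tendsto_atTop_mono' _ ?_ tendsto_id
    filter_upwards [eventually_ge_atTop q] with x hx
    have := intervalIntegral.integral_nonneg (μ := volume) hx fun z _ => hσ₀ z
    simp only [Dfun, id]
    linarith
  · refine tendsto_atBot_mono' _ ?_ tendsto_id
    filter_upwards [eventually_le_atBot q] with x hx
    have := intervalIntegral.integral_nonneg (μ := volume) hx fun z _ => hσ₀ z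
    rw [intervalIntegral.integral_symm] at this
    simp only [Dfun, id]
    linarith

theorem bijective_Dfun (hσ : Continuous (sigmaF f)) (hσ₀ : ∀ x, 0 ≤ sigmaF f x)
    (q : ℝ) : Function.Bijective (Dfun f q) :=
  ⟨(strictMono_Dfun hσ hσ₀ q).injective, surjective_Dfun hσ hσ₀ q⟩

end ContinuousSigma

/-- Commutation of shift and dilation: for `f ∈ 𝓕` and `b := p - D_{f,q}⁻¹(p - a)`,
`S_a 𝒟_q f = 𝒟_p S_b f`. -/
theorem stmt10 (f : ℝ → ℝ → ℝ → ℝ) (hf : MemF f) (p q a : ℝ) :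
    ∀ y v r : ℝ,
      Sop a (Dop f q) y v r =
        Dop (Sop (p - Function.invFun (Dfun f q) (p - a)) f) p y v r := by
  obtain ⟨⟨γ, hγ, hfγ⟩, hσ_pos⟩ := hf
  have hσ := continuous_sigmaF hγ hfγ
  have hbij := bijective_Dfun hσ (fun x => (hσ_pos x).le) q
  set c := Function.invFun (Dfun f q) (p - a)
  have hc : Dfun f q c = p - a := Function.rightInverse_invFun hbij.surjective _
  have hD : Dfun (Sop (p - c) f) p = fun x => Dfun f q (x - (p - c)) + a := by
    funext x
    rw [Dfun_Sop, sub_sub_cancel, Dfun_eq_Dfun_add hσ q c, hc]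
    ring
  intro y v r
  simp only [Sop, Dop, hD, Function.invFun_comp_sub_add hbij, sigmaF_Sop, add_sub_cancel_right]
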